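/- arXiv:1812.05019 — 2 statements merged into one kernel-verified Lean document; each statement's English description precedes it below -/
import Mathlib

section
/- Let t > 0. For every R ≥ 2t, ∫_0^t ∫_ℝ φ_{t−s,R}(y)² dy ds = (2/3)·R·t³ − t⁴/6. -/
/-!
For `0 ≤ a ≤ R`, `φ_{a,R}(y)` is half the length of `[y - a, y + a] ∩ [-R, R]`, a trapezoid in `y`:
it rises linearly on `[-R - a, -R + a]`, equals `a` on `[-R + a, R - a]` and falls linearly on
`[R - a, R + a]`. Hence `∫ φ_{a,R}² = 2 R a² - (2/3) a³`, and integrating this over `a = t - s`,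
`s ∈ [0, t]`, gives the formula.
-/

open MeasureTheory Real intervalIntegral

/-- `φ_{a,R}(y) = (1/2) ∫_{-R}^R 1_{|x-y|≤a} dx`. -/
noncomputable def phi (a R y : ℝ) : ℝ :=
  (1/2) * ∫ x in (-R)..R, if |x - y| ≤ a then (1:ℝ) else 0

open Set

lemma phi_eq_half_overlap (a R y : ℝ) (hR : 0 ≤ R) :
    phi a R y = max (min (y + a) R - max (y - a) (-R)) 0 / 2 := by
  have hind : (fun x : ℝ => if |x - y| ≤ a then (1 : ℝ) else 0) =
      (Icc (y - a) (y + a)).indicator 1 := by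
    ext x
    simp only [abs_sub_comm x y, mem_Icc_iff_abs_le, indicator_apply, Pi.one_apply]
  rw [phi, integral_of_le (by linarith), ← integral_Icc_eq_integral_Ioc, hind,
    integral_indicator_one measurableSet_Icc, measureReal_restrict_apply measurableSet_Icc,
    Icc_inter_Icc, volume_real_Icc]
  ring

section

variable {a R y : ℝ}

lemma continuous_phi (hR : 0 ≤ R) : Continuous (phi a R) := by
  simp_rw [funext fun y => phi_eq_half_overlap a R y hR]
  fun_prop

lemma phi_eq_zero_of_notMem (hR : 0 ≤ R) (hy : y ∉ Icc (-(R + a)) (R + a)) : phi a R y = 0 := by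
  rw [mem_Icc, not_and_or, not_le, not_le] at hy
  rw [phi_eq_half_overlap a R y hR, max_eq_right, zero_div]
  rcases hy with hy | hy
  · linarith [min_le_left (y + a) R, le_max_right (y - a) (-R)]
  · linarith [min_le_right (y + a) R, le_max_left (y - a) (-R)]

variable (ha : 0 ≤ a) (haR : a ≤ R)
include ha haR

lemma eqOn_phi_left : EqOn (phi a R) (fun y => (y + (R + a)) / 2) (Icc (-(R + a)) (-(R - a))) := by
  rintro y ⟨hy₁, hy₂⟩
  rw [phi_eq_half_overlap a R y (by linarith), min_eq_left (show y + a ≤ R by linarith),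
    max_eq_right (show y - a ≤ -R by linarith), max_eq_left (by linarith)]
  ring

lemma eqOn_phi_middle : EqOn (phi a R) (fun _ => a) (Icc (-(R - a)) (R - a)) := by
  rintro y ⟨hy₁, hy₂⟩
  rw [phi_eq_half_overlap a R y (by linarith), min_eq_left (show y + a ≤ R by linarith),
    max_eq_left (show -R ≤ y - a by linarith), max_eq_left (by linarith)]
  ring

lemma eqOn_phi_right : EqOn (phi a R) (fun y => (R + a - y) / 2) (Icc (R - a) (R + a)) := by
  rintro y ⟨hy₁, hy₂⟩
  rw [phi_eq_half_overlap a R y (by linarith), min_eq_right (show R ≤ y + a by linarith),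
    max_eq_left (show -R ≤ y - a by linarith), max_eq_left (by linarith)]
  ring

lemma integral_phi_sq : ∫ y, phi a R y ^ 2 = 2 * R * a ^ 2 - 2 / 3 * a ^ 3 := by
  have hR : 0 ≤ R := ha.trans haR
  have hint : ∀ c d, IntervalIntegrable (fun y => phi a R y ^ 2) volume c d :=
    fun c d => ((continuous_phi hR).pow 2).intervalIntegrable c d
  have hsq {f : ℝ → ℝ} {c d : ℝ} (hcd : c ≤ d) (h : EqOn (phi a R) f (Icc c d)) :
      ∫ y in c..d, phi a R y ^ 2 = ∫ y in c..d, f y ^ 2 :=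
    integral_congr fun y hy => by rw [uIcc_of_le hcd] at hy; simp only [h hy]
  rw [← setIntegral_eq_integral_of_forall_compl_eq_zero
      fun y hy => by rw [phi_eq_zero_of_notMem hR hy, zero_pow two_ne_zero],
    integral_Icc_eq_integral_Ioc, ← integral_of_le (by linarith),
    ← integral_add_adjacent_intervals (hint (-(R + a)) (-(R - a))) (hint _ (R + a)),
    ← integral_add_adjacent_intervals (hint (-(R - a)) (R - a)) (hint _ (R + a)),
    hsq (by linarith) (eqOn_phi_left ha haR), hsq (by linarith) (eqOn_phi_middle ha haR),
    hsq (by linarith) (eqOn_phi_right ha haR)]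
  rw [integral_comp_add_right (fun y => (y / 2) ^ 2) (R + a),
    integral_comp_sub_left (fun y => (y / 2) ^ 2) (R + a)]
  simp only [div_pow, intervalIntegral.integral_div, integral_pow, intervalIntegral.integral_const,
    smul_eq_mul]
  ring

end

/-- For `t > 0` and `R ≥ 2t`:
`∫_0^t ∫_ℝ φ_{t-s,R}(y)² dy ds = (2/3) R t³ - t⁴/6`. -/
theorem stmt_7 (t R : ℝ) (ht : 0 < t) (hR : 2 * t ≤ R) :
    (∫ s in (0:ℝ)..t, ∫ y : ℝ, (phi (t - s) R y) ^ 2)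
      = (2/3) * R * t ^ 3 - t ^ 4 / 6 := by
  calc (∫ s in (0:ℝ)..t, ∫ y : ℝ, (phi (t - s) R y) ^ 2)
      = ∫ s in (0:ℝ)..t, (2 * R * (t - s) ^ 2 - 2 / 3 * (t - s) ^ 3) := by
        refine integral_congr fun s hs => ?_
        rw [uIcc_of_le ht.le] at hs
        exact integral_phi_sq (by linarith [hs.2]) (by linarith [hs.1])
    _ = (2/3) * R * t ^ 3 - t ^ 4 / 6 := by
        simp only [integral_comp_sub_left fun u => 2 * R * u ^ 2 - 2 / 3 * u ^ 3, sub_self, sub_zero,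
          intervalIntegrable_pow, IntervalIntegrable.const_mul, intervalIntegral.integral_sub,
          intervalIntegral.integral_const_mul, integral_pow]
        ring
end

section
/- Let t > 0, 0 ≤ s ≤ t and R ≥ 2t. Then ∫_s^t ∫_{ℝ³} φ_{t−r,R}(z)²·φ_{t−s,R}(y)·φ_{t−s,R}(y')·1_{{|y−z| ≤ r−s}}·1_{{|y'−z| ≤ r−s}} dy dy' dz dr ≤ (8/3)·t⁷·R. -/
/-!
For fixed `r` and `z` the `y`- and `y'`-integrals factor into two equal ones, so the spatial
integral is `∫ φ_{t-r,R}(z)² K(z)² dz` with `K(z) = ∫ φ_{t-s,R}(y) 1_{|y-z| ≤ r-s} dy ≤ 2(r-s)(t-s) ≤ 2t²`.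
Since `φ_{a,R} = ½ 1_{(-R,R]} ⋆ 1_{[-a,a]}` has integral `2Ra` and `φ_{a,R} ≤ a`, we get
`∫ φ_{a,R}² ≤ 2Ra²`; hence the `r`-integrand is at most `8Rt⁴(t-r)²`, whose integral over
`[s,t]` is at most `(8/3)t⁷R`.
-/

open MeasureTheory Real intervalIntegral

open Set Metric

lemma ite_abs_sub_le_eq_indicator (x y a : ℝ) :
    (if |x - y| ≤ a then (1:ℝ) else 0) = (closedBall y a).indicator 1 x := by
  by_cases h : |x - y| ≤ a <;> simp [h, mem_closedBall, Real.dist_eq]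

lemma integrable_indicator_one_of_measure_ne_top {α : Type*} [MeasurableSpace α] {μ : Measure α}
    {s : Set α} (hm : MeasurableSet s) (hs : μ s ≠ ⊤) : Integrable (s.indicator (1 : α → ℝ)) μ :=
  (integrable_indicator_iff hm).2 (integrableOn_const hs)

lemma integrable_ite_abs_sub_le (z c : ℝ) :
    Integrable fun y => if |y - z| ≤ c then (1:ℝ) else 0 := by
  simp only [ite_abs_sub_le_eq_indicator]
  exact integrable_indicator_one_of_measure_ne_top measurableSet_closedBall
    measure_closedBall_lt_top.ne

lemma integral_ite_abs_sub_le (z : ℝ) {c : ℝ} (hc : 0 ≤ c) :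
    ∫ y, (if |y - z| ≤ c then (1:ℝ) else 0) = 2 * c := by
  simp only [ite_abs_sub_le_eq_indicator]
  rw [integral_indicator_one measurableSet_closedBall, volume_real_closedBall hc]

lemma integral_mul_ite_abs_sub_le {f : ℝ → ℝ} {M : ℝ} (hf0 : ∀ y, 0 ≤ f y) (hfM : ∀ y, f y ≤ M)
    (z : ℝ) {c : ℝ} (hc : 0 ≤ c) :
    ∫ y, f y * (if |y - z| ≤ c then (1:ℝ) else 0) ≤ 2 * c * M :=
  calc ∫ y, f y * (if |y - z| ≤ c then (1:ℝ) else 0)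
      ≤ ∫ y, M * (if |y - z| ≤ c then (1:ℝ) else 0) :=
        integral_mono_of_nonneg (.of_forall fun y => by have := hf0 y; positivity)
          ((integrable_ite_abs_sub_le z c).const_mul M)
          (.of_forall fun y => mul_le_mul_of_nonneg_right (hfM y) (by positivity))
    _ = 2 * c * M := by rw [MeasureTheory.integral_const_mul, integral_ite_abs_sub_le z hc]; ring

lemma integral_integral_mul_eq_sq (A : ℝ) (f g : ℝ → ℝ) :
    ∫ y', ∫ y, A * f y * f y' * g y * g y' = A * (∫ y, f y * g y) ^ 2 := by
  have h : ∀ y y', A * f y * f y' * g y * g y' = (A * (f y' * g y')) * (f y * g y) :=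
    fun y y' => by ring
  simp only [h, MeasureTheory.integral_const_mul, MeasureTheory.integral_mul_const]
  ring

section phi

variable {a R : ℝ}

lemma phi_nonneg (hR : 0 ≤ R) (y : ℝ) : 0 ≤ phi a R y :=
  mul_nonneg (by norm_num) (intervalIntegral.integral_nonneg (by linarith) fun x _ => by positivity)

lemma phi_le (hR : 0 ≤ R) (ha : 0 ≤ a) (y : ℝ) : phi a R y ≤ a := by
  have hle : ∫ x in (-R)..R, (if |x - y| ≤ a then (1:ℝ) else 0)
      ≤ ∫ x, (if |x - y| ≤ a then (1:ℝ) else 0) := by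
    rw [integral_of_le (by linarith)]
    exact setIntegral_le_integral (integrable_ite_abs_sub_le y a)
      (.of_forall fun x => by positivity)
  rw [integral_ite_abs_sub_le y ha] at hle
  unfold phi
  linarith

open Convolution in
lemma phi_eq_convolution (hR : 0 ≤ R) :
    phi a R = fun y => (1/2) * ((Ioc (-R) R).indicator 1 ⋆[ContinuousLinearMap.mul ℝ ℝ]
      (closedBall 0 a).indicator 1) y := by
  ext y
  rw [phi, integral_of_le (by linarith), ← MeasureTheory.integral_indicator measurableSet_Ioc,
    convolution_def]
  congr 2 with x
  by_cases hx : x ∈ Ioc (-R) R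
  · simp [hx, ← ite_abs_sub_le_eq_indicator (y - x), abs_sub_comm]
  · simp [hx]

lemma integrable_phi (hR : 0 ≤ R) : Integrable (phi a R) := by
  rw [phi_eq_convolution hR]
  exact ((integrable_indicator_one_of_measure_ne_top measurableSet_Ioc measure_Ioc_lt_top.ne
    ).integrable_convolution _ (integrable_indicator_one_of_measure_ne_top measurableSet_closedBall
    measure_closedBall_lt_top.ne)).const_mul _

lemma integral_phi (hR : 0 ≤ R) (ha : 0 ≤ a) : ∫ y, phi a R y = 2 * R * a := by
  rw [phi_eq_convolution hR, MeasureTheory.integral_const_mul, integral_convolution _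
    (integrable_indicator_one_of_measure_ne_top measurableSet_Ioc measure_Ioc_lt_top.ne)
    (integrable_indicator_one_of_measure_ne_top measurableSet_closedBall
      measure_closedBall_lt_top.ne),
    ContinuousLinearMap.mul_apply', integral_indicator_one measurableSet_Ioc,
    integral_indicator_one measurableSet_closedBall, volume_real_Ioc_of_le (by linarith),
    volume_real_closedBall ha]
  ring

lemma phi_sq_le_mul_phi (hR : 0 ≤ R) (ha : 0 ≤ a) (y : ℝ) : phi a R y ^ 2 ≤ a * phi a R y := by
  rw [sq]
  exact mul_le_mul_of_nonneg_right (phi_le hR ha y) (phi_nonneg hR y)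

lemma integrable_phi_sq (hR : 0 ≤ R) (ha : 0 ≤ a) : Integrable fun y => phi a R y ^ 2 :=
  ((integrable_phi hR).const_mul a).mono' ((integrable_phi hR).aestronglyMeasurable.pow 2)
    (.of_forall fun y => by
      rw [Real.norm_eq_abs, abs_of_nonneg (sq_nonneg _)]; exact phi_sq_le_mul_phi hR ha y)

lemma integral_phi_sq_le (hR : 0 ≤ R) (ha : 0 ≤ a) : ∫ y, phi a R y ^ 2 ≤ 2 * R * a ^ 2 :=
  calc ∫ y, phi a R y ^ 2 ≤ ∫ y, a * phi a R y :=
        integral_mono_of_nonneg (.of_forall fun y => sq_nonneg _)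
          ((integrable_phi hR).const_mul a) (.of_forall (phi_sq_le_mul_phi hR ha))
    _ = 2 * R * a ^ 2 := by rw [MeasureTheory.integral_const_mul, integral_phi hR ha]; ring

lemma integral_phi_sq_mul_sq_integral_le (hR : 0 ≤ R) (ha : 0 ≤ a) {b c : ℝ} (hb : 0 ≤ b)
    (hc : 0 ≤ c) :
    ∫ z, phi a R z ^ 2 * (∫ y, phi b R y * (if |y - z| ≤ c then (1:ℝ) else 0)) ^ 2
      ≤ 2 * R * a ^ 2 * (2 * c * b) ^ 2 := by
  have hK (z : ℝ) :
      (∫ y, phi b R y * (if |y - z| ≤ c then (1:ℝ) else 0)) ^ 2 ≤ (2 * c * b) ^ 2 :=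
    pow_le_pow_left₀
      (MeasureTheory.integral_nonneg fun y => by have := phi_nonneg (a := b) hR y; positivity)
      (integral_mul_ite_abs_sub_le (phi_nonneg hR) (phi_le hR hb) z hc) 2
  calc _ ≤ ∫ z, (2 * c * b) ^ 2 * phi a R z ^ 2 :=
        integral_mono_of_nonneg (.of_forall fun z => by positivity)
          ((integrable_phi_sq hR ha).const_mul _)
          (.of_forall fun z => by
            rw [mul_comm]; exact mul_le_mul_of_nonneg_right (hK z) (sq_nonneg _))
    _ ≤ (2 * c * b) ^ 2 * (2 * R * a ^ 2) := by
        rw [MeasureTheory.integral_const_mul]; gcongr; exact integral_phi_sq_le hR ha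
    _ = 2 * R * a ^ 2 * (2 * c * b) ^ 2 := mul_comm _ _

end phi

lemma intervalIntegral.integral_mono_of_nonneg {μ : Measure ℝ} {f g : ℝ → ℝ} {a b : ℝ}
    (hab : a ≤ b) (hf : ∀ x ∈ Ioc a b, 0 ≤ f x) (hg : IntervalIntegrable g μ a b)
    (hfg : ∀ x ∈ Ioc a b, f x ≤ g x) : ∫ x in a..b, f x ∂μ ≤ ∫ x in a..b, g x ∂μ := by
  rw [integral_of_le hab, integral_of_le hab]
  exact MeasureTheory.integral_mono_of_nonneg (ae_restrict_of_forall_mem measurableSet_Ioc hf)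
    hg.1 (ae_restrict_of_forall_mem measurableSet_Ioc hfg)

theorem stmt_15_general (t s R : ℝ) (hs0 : 0 ≤ s) (hst : s ≤ t) (hR : 2 * t ≤ R) :
    (∫ r in s..t, ∫ z : ℝ, ∫ y' : ℝ, ∫ y : ℝ,
        (phi (t - r) R z) ^ 2 * phi (t - s) R y * phi (t - s) R y' *
          (if |y - z| ≤ r - s then (1:ℝ) else 0) *
          (if |y' - z| ≤ r - s then (1:ℝ) else 0))
      ≤ (8/3) * t ^ 7 * R := by
  have hR0 : 0 ≤ R := by linarith
  simp only [integral_integral_mul_eq_sq]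
  calc _ ≤ ∫ r in s..t, 8 * R * t ^ 4 * (t - r) ^ 2 := by
        refine intervalIntegral.integral_mono_of_nonneg hst
          (fun r _ => MeasureTheory.integral_nonneg fun z => by positivity)
          ((by fun_prop : Continuous _).intervalIntegrable _ _) fun r ⟨hsr, hrt⟩ => ?_
        calc _ ≤ 2 * R * (t - r) ^ 2 * (2 * (r - s) * (t - s)) ^ 2 :=
              integral_phi_sq_mul_sq_integral_le hR0 (by linarith) (by linarith) (by linarith)
          _ ≤ 2 * R * (t - r) ^ 2 * (2 * t * t) ^ 2 := by gcongr <;> linarith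
          _ = 8 * R * t ^ 4 * (t - r) ^ 2 := by ring
    _ = 8 * R * t ^ 4 * ((t - s) ^ 3 / 3) := by
        rw [intervalIntegral.integral_const_mul,
          intervalIntegral.integral_comp_sub_left (fun x => x ^ 2), integral_pow]
        ring
    _ ≤ (8/3) * t ^ 7 * R := by
        have : (t - s) ^ 3 ≤ t ^ 3 := by gcongr; linarith
        nlinarith [mul_nonneg (mul_nonneg hR0 (pow_nonneg (hs0.trans hst) 4)) (sub_nonneg.2 this)]

/-- For `t > 0`, `0 ≤ s ≤ t` and `R ≥ 2t`:
`∫_s^t ∫_{ℝ³} φ_{t-r,R}(z)² φ_{t-s,R}(y) φ_{t-s,R}(y') 1_{|y-z|≤r-s} 1_{|y'-z|≤r-s}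
  dy dy' dz dr ≤ (8/3) t⁷ R`. -/
theorem stmt_15 (t s R : ℝ) (ht : 0 < t) (hs0 : 0 ≤ s) (hst : s ≤ t) (hR : 2 * t ≤ R) :
    (∫ r in s..t, ∫ z : ℝ, ∫ y' : ℝ, ∫ y : ℝ,
        (phi (t - r) R z) ^ 2 * phi (t - s) R y * phi (t - s) R y' *
          (if |y - z| ≤ r - s then (1:ℝ) else 0) *
          (if |y' - z| ≤ r - s then (1:ℝ) else 0))
      ≤ (8/3) * t ^ 7 * R :=
  stmt_15_general t s R hs0 hst hR
end
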